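/- Let K ⊂ ℝⁿ (n ≥ 2) be a compact convex body and for y ∈ ℝ let P_y = {x ∈ ℝ^{n−1} : (y,x) ∈ K} with |P_y| its (n−1)-dimensional Lebesgue measure. Then for all real a and nonnegative b, c: |P_{a+b}| · |P_{a+c}| ≥ |P_a| · |P_{a+b+c}|. -/

import Mathlib

/-!
The function `y ↦ |P_y|` is log-concave; writing `a + b` and `a + c` as the convex combinations
of `a` and `a + b + c` with weights `s = b / (b + c)` and `1 - s` and multiplying the two
log-concavity inequalities gives the claim. Since `(1 - t) P_u + t P_v ⊆ P_{(1-t)u + tv}`,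
log-concavity is the Brunn–Minkowski inequality `|A|^(1-t) |B|^t ≤ |(1-t) A + t B|` for the
compact convex slices, which is proved by induction on the dimension. In the inductive step
Fubini writes the three volumes as integrals of slice volumes, and the induction hypothesis puts
these functions in the setting of a one-dimensional Prékopa–Leindler inequality. That inequality
holds for quasiconcave functions: once the suprema are normalised to `1`, the superlevel sets at
a common level are nonempty intervals, for which `|(1-t) I + t J| = (1-t)|I| + t|J|`;
integrating over the level (layer cake) and weighted AM–GM conclude.
-/

open MeasureTheory Set Bornology Function
open scoped Pointwise ENNReal

namespace Real

theorem volume_eq_sSup_sub_sInf_of_convex {S : Set ℝ} (hS : Convex ℝ S) (hne : S.Nonempty)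
    (hb : IsBounded S) : volume S = ENNReal.ofReal (sSup S - sInf S) := by
  refine le_antisymm ((volume_le_diam S).trans_eq (ediam_eq hb)) ?_
  rw [← volume_Ioo]
  refine measure_mono fun x hx => ?_
  obtain ⟨a, ha, hax⟩ := (csInf_lt_iff hb.bddBelow hne).1 hx.1
  obtain ⟨b, hb', hxb⟩ := (lt_csSup_iff hb.bddAbove hne).1 hx.2
  exact hS.ordConnected.out ha hb' ⟨hax.le, hxb.le⟩

theorem volume_add_of_convex {S T : Set ℝ} (hS : Convex ℝ S) (hT : Convex ℝ T)
    (hSne : S.Nonempty) (hTne : T.Nonempty) (hSb : IsBounded S) (hTb : IsBounded T) :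
    volume (S + T) = volume S + volume T := by
  have hSle := csInf_le_csSup hSne hSb.bddBelow hSb.bddAbove
  have hTle := csInf_le_csSup hTne hTb.bddBelow hTb.bddAbove
  rw [volume_eq_sSup_sub_sInf_of_convex (hS.add hT) (hSne.add hTne) (hSb.add hTb),
    volume_eq_sSup_sub_sInf_of_convex hS hSne hSb, volume_eq_sSup_sub_sInf_of_convex hT hTne hTb,
    csSup_add hSne hSb.bddAbove hTne hTb.bddAbove, csInf_add hSne hSb.bddBelow hTne hTb.bddBelow,
    ← ENNReal.ofReal_add (by linarith) (by linarith)]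
  ring_nf

theorem volume_smul_add_smul_of_convex {S T : Set ℝ} (hS : Convex ℝ S) (hT : Convex ℝ T)
    (hSne : S.Nonempty) (hTne : T.Nonempty) (hSb : IsBounded S) (hTb : IsBounded T)
    {a b : ℝ} (ha : 0 ≤ a) (hb : 0 ≤ b) :
    volume (a • S + b • T) = ENNReal.ofReal a * volume S + ENNReal.ofReal b * volume T := by
  rw [volume_add_of_convex (hS.smul a) (hT.smul b) hSne.smul_set hTne.smul_set (hSb.smul₀ a)
    (hTb.smul₀ b), Measure.addHaar_smul, Measure.addHaar_smul]
  simp [abs_of_nonneg ha, abs_of_nonneg hb]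

theorem min_le_rpow_mul_rpow {x y t : ℝ} (hx : 0 ≤ x) (hy : 0 ≤ y) (ht0 : 0 ≤ t)
    (ht1 : t ≤ 1) : min x y ≤ x ^ (1 - t) * y ^ t := by
  have hm : 0 ≤ min x y := le_min hx hy
  calc min x y = min x y ^ (1 - t) * min x y ^ t := by
        rw [← rpow_add' hm (by norm_num), sub_add_cancel, rpow_one]
    _ ≤ x ^ (1 - t) * y ^ t := by
        gcongr
        · exact min_le_left x y
        · exact min_le_right x y

theorem lt_rpow_mul_rpow_of_lt {r x y t : ℝ} (hr : 0 < r) (hx : r < x) (hy : r < y) (ht0 : 0 < t)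
    (ht1 : t < 1) : r < x ^ (1 - t) * y ^ t :=
  calc r = r ^ (1 - t) * r ^ t := by rw [← rpow_add hr, sub_add_cancel, rpow_one]
    _ < x ^ (1 - t) * y ^ t := by gcongr

end Real

namespace ENNReal

theorem rpow_mul_rpow_le_add {x y : ℝ≥0∞} {t : ℝ} (ht0 : 0 < t) (ht1 : t < 1) :
    x ^ (1 - t) * y ^ t ≤ ENNReal.ofReal (1 - t) * x + ENNReal.ofReal t * y := by
  rcases eq_or_ne x ⊤ with rfl | hx
  · simp [mul_top (ofReal_pos.2 (sub_pos.2 ht1)).ne']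
  rcases eq_or_ne y ⊤ with rfl | hy
  · simp [mul_top (ofReal_pos.2 ht0).ne']
  lift x to NNReal using hx
  lift y to NNReal using hy
  have h := NNReal.geom_mean_le_arith_mean2_weighted (1 - t).toNNReal t.toNNReal x y
    (by rw [← Real.toNNReal_add (by linarith) ht0.le, sub_add_cancel, Real.toNNReal_one])
  rw [Real.coe_toNNReal _ (by linarith), Real.coe_toNNReal _ ht0.le] at h
  rw [← coe_rpow_of_nonneg _ (by linarith), ← coe_rpow_of_nonneg _ ht0.le, ENNReal.ofReal,
    ENNReal.ofReal]
  exact_mod_cast h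

theorem rpow_mul_rpow_le_of_add_le {x y z : ℝ≥0∞} {a b t : ℝ} (ha : 0 < a) (hb : 0 < b)
    (ht0 : 0 < t) (ht1 : t < 1)
    (h : ENNReal.ofReal (1 - t) * (ENNReal.ofReal a⁻¹ * x) +
        ENNReal.ofReal t * (ENNReal.ofReal b⁻¹ * y) ≤
      ENNReal.ofReal (a ^ (1 - t) * b ^ t)⁻¹ * z) :
    x ^ (1 - t) * y ^ t ≤ z := by
  have h1t : 0 < 1 - t := sub_pos.2 ht1
  set c := a ^ (1 - t) * b ^ t
  have hc : 0 < c := by positivity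
  have hscale :
      ENNReal.ofReal c * (ENNReal.ofReal a⁻¹ ^ (1 - t) * ENNReal.ofReal b⁻¹ ^ t) = 1 := by
    rw [ofReal_rpow_of_nonneg (inv_nonneg.2 ha.le) h1t.le,
      ofReal_rpow_of_nonneg (inv_nonneg.2 hb.le) ht0.le, ← ofReal_mul (by positivity),
      ← ofReal_mul hc.le, Real.inv_rpow ha.le, Real.inv_rpow hb.le, ← mul_inv,
      mul_inv_cancel₀ hc.ne', ofReal_one]
  calc x ^ (1 - t) * y ^ t
      = ENNReal.ofReal c *
          ((ENNReal.ofReal a⁻¹ * x) ^ (1 - t) * (ENNReal.ofReal b⁻¹ * y) ^ t) := by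
        rw [mul_rpow_of_nonneg _ _ h1t.le, mul_rpow_of_nonneg _ _ ht0.le, mul_mul_mul_comm,
          ← mul_assoc, hscale, one_mul]
    _ ≤ ENNReal.ofReal c * (ENNReal.ofReal c⁻¹ * z) :=
        mul_le_mul_right ((rpow_mul_rpow_le_add ht0 ht1).trans h) _
    _ = z := by
        rw [← mul_assoc, ← ofReal_mul hc.le, mul_inv_cancel₀ hc.ne', ofReal_one, one_mul]

end ENNReal

theorem exists_isLUB_range_pos_of_lintegral_ne_zero {α : Type*} [MeasurableSpace α]
    {μ : Measure α} {f : α → ℝ} (hfb : BddAbove (range f))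
    (hf : ∫⁻ x, ENNReal.ofReal (f x) ∂μ ≠ 0) : ∃ m, 0 < m ∧ IsLUB (range f) m := by
  obtain ⟨x, hx⟩ : ∃ x, 0 < f x := by
    by_contra! h
    exact hf (by simp [ENNReal.ofReal_eq_zero.2 (h _)])
  have hm := isLUB_csSup ⟨_, mem_range_self x⟩ hfb
  exact ⟨_, hx.trans_le (hm.1 (mem_range_self x)), hm⟩

theorem IsLUB.range_inv_mul {ι : Type*} {f : ι → ℝ} {m : ℝ} (hm : 0 < m)
    (hf : IsLUB (range f) m) : IsLUB (range fun x => m⁻¹ * f x) 1 := by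
  have := hf.mul_left (inv_nonneg.2 hm.le)
  rwa [← range_comp, inv_mul_cancel₀ hm.ne'] at this

theorem lintegral_ofReal_const_mul {α : Type*} [MeasurableSpace α] {μ : Measure α} {c : ℝ}
    (hc : 0 ≤ c) (f : α → ℝ) :
    ∫⁻ x, ENNReal.ofReal (c * f x) ∂μ = ENNReal.ofReal c * ∫⁻ x, ENNReal.ofReal (f x) ∂μ := by
  simp_rw [ENNReal.ofReal_mul hc]
  exact lintegral_const_mul' _ _ ENNReal.ofReal_ne_top

section PrekopaLeindler

variable {f g h : ℝ → ℝ} {t : ℝ}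

theorem volume_superlevel_le_of_isLUB_one (ht0 : 0 < t) (ht1 : t < 1)
    (hf : QuasiconcaveOn ℝ univ f) (hg : QuasiconcaveOn ℝ univ g)
    (hfs : IsBounded (support f)) (hgs : IsBounded (support g))
    (hf1 : IsLUB (range f) 1) (hg1 : IsLUB (range g) 1)
    (hfgh : ∀ x y, f x ^ (1 - t) * g y ^ t ≤ h ((1 - t) * x + t * y)) {r : ℝ} (hr : 0 < r) :
    ENNReal.ofReal (1 - t) * volume {x | r < f x} + ENNReal.ofReal t * volume {x | r < g x} ≤
      volume {x | r < h x} := by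
  rcases le_or_gt 1 r with h1r | hr1
  · have hempty : ∀ {φ : ℝ → ℝ}, IsLUB (range φ) 1 → {x | r < φ x} = ∅ := fun hφ =>
      eq_empty_of_forall_notMem fun x hx => (hφ.1 (mem_range_self x)).not_gt (h1r.trans_lt hx)
    simp [hempty hf1, hempty hg1]
  have hne : ∀ {φ : ℝ → ℝ}, IsLUB (range φ) 1 → {x | r < φ x}.Nonempty := fun hφ => by
    obtain ⟨_, ⟨x, rfl⟩, hx, -⟩ := hφ.exists_between hr1
    exact ⟨x, hx⟩
  have hconv : ∀ {φ : ℝ → ℝ}, QuasiconcaveOn ℝ univ φ → Convex ℝ {x | r < φ x} :=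
    fun hφ => by simpa only [mem_univ, true_and] using hφ.convex_gt r
  have hbdd : ∀ {φ : ℝ → ℝ}, IsBounded (support φ) → IsBounded {x | r < φ x} :=
    fun hφ => hφ.subset fun x hx => (hr.trans hx).ne'
  rw [← Real.volume_smul_add_smul_of_convex (hconv hf) (hconv hg) (hne hf1) (hne hg1) (hbdd hfs)
    (hbdd hgs) (by linarith) ht0.le]
  refine measure_mono ?_
  rintro _ ⟨_, ⟨u, hu, rfl⟩, _, ⟨v, hv, rfl⟩, rfl⟩
  exact (Real.lt_rpow_mul_rpow_of_lt hr hu hv ht0 ht1).trans_le (hfgh u v)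

theorem lintegral_add_le_of_isLUB_one (ht0 : 0 < t) (ht1 : t < 1)
    (hf0 : 0 ≤ f) (hg0 : 0 ≤ g) (hh0 : 0 ≤ h)
    (hfm : Measurable f) (hgm : Measurable g) (hhm : Measurable h)
    (hf : QuasiconcaveOn ℝ univ f) (hg : QuasiconcaveOn ℝ univ g)
    (hfs : IsBounded (support f)) (hgs : IsBounded (support g))
    (hf1 : IsLUB (range f) 1) (hg1 : IsLUB (range g) 1)
    (hfgh : ∀ x y, f x ^ (1 - t) * g y ^ t ≤ h ((1 - t) * x + t * y)) :
    ENNReal.ofReal (1 - t) * (∫⁻ x, ENNReal.ofReal (f x)) +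
        ENNReal.ofReal t * ∫⁻ x, ENNReal.ofReal (g x) ≤ ∫⁻ x, ENNReal.ofReal (h x) := by
  rw [lintegral_eq_lintegral_meas_lt volume (ae_of_all _ hf0) hfm.aemeasurable,
    lintegral_eq_lintegral_meas_lt volume (ae_of_all _ hg0) hgm.aemeasurable,
    lintegral_eq_lintegral_meas_lt volume (ae_of_all _ hh0) hhm.aemeasurable,
    ← lintegral_const_mul' _ _ ENNReal.ofReal_ne_top,
    ← lintegral_const_mul' _ _ ENNReal.ofReal_ne_top]
  exact (le_lintegral_add _ _).trans <| setLIntegral_mono' measurableSet_Ioi fun r hr =>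
    volume_superlevel_le_of_isLUB_one ht0 ht1 hf hg hfs hgs hf1 hg1 hfgh hr

theorem rpow_lintegral_mul_rpow_lintegral_le (ht0 : 0 < t) (ht1 : t < 1)
    (hf0 : 0 ≤ f) (hg0 : 0 ≤ g) (hh0 : 0 ≤ h)
    (hfm : Measurable f) (hgm : Measurable g) (hhm : Measurable h)
    (hf : QuasiconcaveOn ℝ univ f) (hg : QuasiconcaveOn ℝ univ g)
    (hfs : IsBounded (support f)) (hgs : IsBounded (support g))
    (hfb : BddAbove (range f)) (hgb : BddAbove (range g))
    (hfgh : ∀ x y, f x ^ (1 - t) * g y ^ t ≤ h ((1 - t) * x + t * y)) :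
    (∫⁻ x, ENNReal.ofReal (f x)) ^ (1 - t) * (∫⁻ x, ENNReal.ofReal (g x)) ^ t ≤
      ∫⁻ x, ENNReal.ofReal (h x) := by
  rcases eq_or_ne (∫⁻ x, ENNReal.ofReal (f x)) 0 with hf' | hf'
  · simp [hf', ENNReal.zero_rpow_of_pos (sub_pos.2 ht1)]
  rcases eq_or_ne (∫⁻ x, ENNReal.ofReal (g x)) 0 with hg' | hg'
  · simp [hg', ENNReal.zero_rpow_of_pos ht0]
  obtain ⟨a, ha, hfLUB⟩ := exists_isLUB_range_pos_of_lintegral_ne_zero hfb hf'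
  obtain ⟨b, hb, hgLUB⟩ := exists_isLUB_range_pos_of_lintegral_ne_zero hgb hg'
  have ha' : 0 ≤ a⁻¹ := inv_nonneg.2 ha.le
  have hb' : 0 ≤ b⁻¹ := inv_nonneg.2 hb.le
  have hc' : 0 ≤ (a ^ (1 - t) * b ^ t)⁻¹ := by positivity
  -- rescaling `h` by the geometric mean of the suprema keeps `hfgh` valid
  have key := lintegral_add_le_of_isLUB_one
    (f := fun x => a⁻¹ * f x) (g := fun x => b⁻¹ * g x)
    (h := fun x => (a ^ (1 - t) * b ^ t)⁻¹ * h x) ht0 ht1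
    (fun x => mul_nonneg ha' (hf0 x)) (fun x => mul_nonneg hb' (hg0 x))
    (fun x => mul_nonneg hc' (hh0 x)) (hfm.const_mul _) (hgm.const_mul _) (hhm.const_mul _)
    (hf.monotone_comp (monotone_mul_left_of_nonneg ha'))
    (hg.monotone_comp (monotone_mul_left_of_nonneg hb'))
    (hfs.subset (support_mul_subset_right _ _)) (hgs.subset (support_mul_subset_right _ _))
    (hfLUB.range_inv_mul ha) (hgLUB.range_inv_mul hb) fun x y => by
      rw [Real.mul_rpow ha' (hf0 x), Real.mul_rpow hb' (hg0 y), mul_mul_mul_comm,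
        Real.inv_rpow ha.le, Real.inv_rpow hb.le, ← mul_inv]
      exact mul_le_mul_of_nonneg_left (hfgh x y) hc'
  rw [lintegral_ofReal_const_mul ha', lintegral_ofReal_const_mul hb',
    lintegral_ofReal_const_mul hc'] at key
  exact ENNReal.rpow_mul_rpow_le_of_add_le ha hb ht0 ht1 key

end PrekopaLeindler

def IsLogConcave (f : ℝ → ℝ) : Prop :=
  ∀ x y t, 0 < t → t < 1 → f x ^ (1 - t) * f y ^ t ≤ f ((1 - t) * x + t * y)

namespace IsLogConcave

variable {f : ℝ → ℝ}

theorem quasiconcaveOn (hf0 : 0 ≤ f) (hf : IsLogConcave f) : QuasiconcaveOn ℝ univ f := by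
  refine quasiconcaveOn_iff_min_le.2 ⟨convex_univ, fun x _ y _ a b ha hb hab => ?_⟩
  rcases ha.eq_or_lt with rfl | ha
  · obtain rfl : b = 1 := by linarith
    simp
  rcases hb.eq_or_lt with rfl | hb
  · obtain rfl : a = 1 := by linarith
    simp
  obtain rfl : a = 1 - b := by linarith
  exact (Real.min_le_rpow_mul_rpow (hf0 x) (hf0 y) hb.le (by linarith)).trans
    (hf x y b hb (by linarith))

theorem mul_le_mul_add (hf0 : 0 ≤ f) (hf : IsLogConcave f) {a b c : ℝ} (hb : 0 ≤ b)
    (hc : 0 ≤ c) : f a * f (a + b + c) ≤ f (a + b) * f (a + c) := by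
  rcases hb.eq_or_lt with rfl | hb
  · simp
  rcases hc.eq_or_lt with rfl | hc
  · simp [mul_comm]
  set s := b / (b + c)
  have hs : s * (b + c) = b := div_mul_cancel₀ b (by positivity)
  have hs0 : 0 < s := by positivity
  have hs1 : s < 1 := (div_lt_one (by positivity)).2 (by linarith)
  have hab := hf a (a + b + c) s hs0 hs1
  have hac := hf a (a + b + c) (1 - s) (by linarith) (by linarith)
  rw [show (1 - s) * a + s * (a + b + c) = a + b by linear_combination hs] at hab
  rw [sub_sub_cancel, show s * a + (1 - s) * (a + b + c) = a + c by linear_combination -hs] at hac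
  have hsplit : ∀ x : ℝ, 0 ≤ x → x = x ^ (1 - s) * x ^ s := fun x hx => by
    rw [← Real.rpow_add' hx (by norm_num), sub_add_cancel, Real.rpow_one]
  calc f a * f (a + b + c)
      = (f a ^ (1 - s) * f (a + b + c) ^ s) * (f a ^ s * f (a + b + c) ^ (1 - s)) := by
        rw [mul_mul_mul_comm, ← hsplit (f a) (hf0 a), mul_comm (f (a + b + c) ^ s),
          ← hsplit _ (hf0 _)]
    _ ≤ f (a + b) * f (a + c) := _root_.mul_le_mul hab hac
        (mul_nonneg (Real.rpow_nonneg (hf0 _) _) (Real.rpow_nonneg (hf0 _) _)) (hf0 _)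

end IsLogConcave

section Slice

variable {d : ℕ}

def slice (S : Set (Fin (d + 1) → ℝ)) (y : ℝ) : Set (Fin d → ℝ) :=
  {w | (Fin.cons y w : Fin (d + 1) → ℝ) ∈ S}

noncomputable def sliceVolume (S : Set (Fin (d + 1) → ℝ)) (y : ℝ) : ℝ :=
  (volume (slice S y)).toReal

theorem smul_cons_add_smul_cons (a b y z : ℝ) (w w' : Fin d → ℝ) :
    a • (Fin.cons y w : Fin (d + 1) → ℝ) + b • (Fin.cons z w' : Fin (d + 1) → ℝ) =
      Fin.cons (a * y + b * z) (a • w + b • w') := by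
  ext i
  refine Fin.cases ?_ (fun j => ?_) i <;> simp

theorem smul_slice_add_smul_slice_subset (A B : Set (Fin (d + 1) → ℝ)) (a b u v : ℝ) :
    a • slice A u + b • slice B v ⊆ slice (a • A + b • B) (a * u + b * v) := by
  rintro _ ⟨_, ⟨w, hw, rfl⟩, _, ⟨w', hw', rfl⟩, rfl⟩
  show (Fin.cons _ _ : Fin (d + 1) → ℝ) ∈ a • A + b • B
  rw [← smul_cons_add_smul_cons]
  exact add_mem_add (smul_mem_smul_set hw) (smul_mem_smul_set hw')

variable {S : Set (Fin (d + 1) → ℝ)}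

theorem Convex.slice (hS : Convex ℝ S) (y : ℝ) : Convex ℝ (slice S y) :=
  convex_iff_pointwise_add_subset.2 fun a b ha hb hab => by
    simpa [← add_mul, hab, ← hS.add_smul ha hb] using
      smul_slice_add_smul_slice_subset S S a b y y

theorem slice_subset_image_tail (y : ℝ) : slice S y ⊆ Fin.tail '' S :=
  fun _ hw => ⟨_, hw, by simp⟩

theorem IsCompact.slice (hS : IsCompact S) (y : ℝ) : IsCompact (slice S y) :=
  (hS.image continuous_id.finTail).of_isClosed_subset
    (hS.isClosed.preimage (continuous_const.finCons continuous_id)) (slice_subset_image_tail y)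

theorem slice_eq_preimage_prodMk (S : Set (Fin (d + 1) → ℝ)) (y : ℝ) :
    slice S y =
      Prod.mk y ⁻¹' ((MeasurableEquiv.piFinSuccAbove (fun _ => ℝ) 0).symm ⁻¹' S) := by
  ext w
  simp [slice, MeasurableEquiv.piFinSuccAbove_symm_apply, Fin.consEquiv]

theorem volume_eq_lintegral_volume_slice (hS : MeasurableSet S) :
    volume S = ∫⁻ y, volume (slice S y) := by
  rw [← (volume_preserving_piFinSuccAbove (fun _ : Fin (d + 1) => ℝ) 0).symm.measure_preimage
      hS.nullMeasurableSet, Measure.volume_eq_prod,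
    Measure.prod_apply (hS.preimage (MeasurableEquiv.measurable _))]
  simp_rw [slice_eq_preimage_prodMk]

theorem measurable_sliceVolume (hS : MeasurableSet S) : Measurable (sliceVolume S) := by
  unfold sliceVolume
  simp_rw [slice_eq_preimage_prodMk]
  exact (measurable_measure_prodMk_left (hS.preimage (MeasurableEquiv.measurable _))).ennreal_toReal

theorem sliceVolume_nonneg : 0 ≤ sliceVolume S := fun _ => ENNReal.toReal_nonneg

theorem bddAbove_range_sliceVolume (hS : IsCompact S) : BddAbove (range (sliceVolume S)) :=
  ⟨_, forall_mem_range.2 fun y =>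
    ENNReal.toReal_mono (hS.image continuous_id.finTail).measure_lt_top.ne
      (measure_mono (slice_subset_image_tail y))⟩

theorem isBounded_support_sliceVolume (hS : IsCompact S) : IsBounded (support (sliceVolume S)) := by
  refine (hS.image (continuous_apply 0)).isBounded.subset fun y hy => ?_
  obtain ⟨w, hw⟩ := nonempty_of_measure_ne_zero (ne_of_apply_ne ENNReal.toReal hy)
  exact ⟨_, hw, Fin.cons_zero _ _⟩

theorem lintegral_ofReal_sliceVolume (hS : IsCompact S) :
    ∫⁻ y, ENNReal.ofReal (sliceVolume S y) = volume S := by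
  simp_rw [sliceVolume, ENNReal.ofReal_toReal (hS.slice _).measure_lt_top.ne]
  exact (volume_eq_lintegral_volume_slice hS.measurableSet).symm

end Slice

def ConvexBrunnMinkowski (d : ℕ) : Prop :=
  ∀ A B : Set (Fin d → ℝ), IsCompact A → IsCompact B → Convex ℝ A → Convex ℝ B →
    ∀ t : ℝ, 0 < t → t < 1 →
      volume A ^ (1 - t) * volume B ^ t ≤ volume ((1 - t) • A + t • B)

section SliceVolume

variable {d : ℕ} {S : Set (Fin (d + 1) → ℝ)}

theorem sliceVolume_rpow_mul_rpow_le (hBM : ConvexBrunnMinkowski d)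
    {A B : Set (Fin (d + 1) → ℝ)} (hA : IsCompact A) (hB : IsCompact B) (hAc : Convex ℝ A)
    (hBc : Convex ℝ B) {t : ℝ} (ht0 : 0 < t) (ht1 : t < 1) (u v : ℝ) :
    sliceVolume A u ^ (1 - t) * sliceVolume B v ^ t ≤
      sliceVolume ((1 - t) • A + t • B) ((1 - t) * u + t * v) := by
  rw [sliceVolume, sliceVolume, ENNReal.toReal_rpow, ENNReal.toReal_rpow, ← ENNReal.toReal_mul]
  exact ENNReal.toReal_mono (((hA.smul _).add (hB.smul _)).slice _).measure_lt_top.ne <|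
    (hBM _ _ (hA.slice u) (hB.slice v) (hAc.slice u) (hBc.slice v) t ht0 ht1).trans
      (measure_mono (smul_slice_add_smul_slice_subset A B _ _ u v))

theorem isLogConcave_sliceVolume (hBM : ConvexBrunnMinkowski d) (hS : IsCompact S)
    (hSc : Convex ℝ S) : IsLogConcave (sliceVolume S) := fun u v t ht0 ht1 => by
  simpa [← hSc.add_smul (sub_pos.2 ht1).le ht0.le] using
    sliceVolume_rpow_mul_rpow_le hBM hS hS hSc hSc ht0 ht1 u v

end SliceVolume

theorem convexBrunnMinkowski_zero : ConvexBrunnMinkowski 0 := by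
  intro A B _ _ _ _ t ht0 ht1
  rcases A.eq_empty_or_nonempty with rfl | hA
  · simp [ENNReal.zero_rpow_of_pos (sub_pos.2 ht1)]
  rcases B.eq_empty_or_nonempty with rfl | hB
  · simp [ENNReal.zero_rpow_of_pos ht0]
  rw [(hA.smul_set.add hB.smul_set : ((1 - t) • A + t • B).Nonempty).eq_univ, hA.eq_univ,
    hB.eq_univ]
  simp [volume_pi]

theorem ConvexBrunnMinkowski.succ {d : ℕ} (hBM : ConvexBrunnMinkowski d) :
    ConvexBrunnMinkowski (d + 1) := by
  intro A B hA hB hAc hBc t ht0 ht1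
  have hC : IsCompact ((1 - t) • A + t • B) := (hA.smul _).add (hB.smul _)
  rw [← lintegral_ofReal_sliceVolume hA, ← lintegral_ofReal_sliceVolume hB,
    ← lintegral_ofReal_sliceVolume hC]
  exact rpow_lintegral_mul_rpow_lintegral_le ht0 ht1 sliceVolume_nonneg sliceVolume_nonneg
    sliceVolume_nonneg (measurable_sliceVolume hA.measurableSet)
    (measurable_sliceVolume hB.measurableSet) (measurable_sliceVolume hC.measurableSet)
    ((isLogConcave_sliceVolume hBM hA hAc).quasiconcaveOn sliceVolume_nonneg)
    ((isLogConcave_sliceVolume hBM hB hBc).quasiconcaveOn sliceVolume_nonneg)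
    (isBounded_support_sliceVolume hA) (isBounded_support_sliceVolume hB)
    (bddAbove_range_sliceVolume hA) (bddAbove_range_sliceVolume hB)
    (sliceVolume_rpow_mul_rpow_le hBM hA hB hAc hBc ht0 ht1)

theorem convexBrunnMinkowski (d : ℕ) : ConvexBrunnMinkowski d :=
  Nat.rec convexBrunnMinkowski_zero (fun _ => ConvexBrunnMinkowski.succ) d

theorem slice_volume_ineq_general (k : ℕ) (K : Set (Fin (k + 2) → ℝ))
    (hKc : IsCompact K) (hconv : Convex ℝ K)
    (P : ℝ → Set (Fin (k + 1) → ℝ))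
    (hP : ∀ y, P y = {w | Fin.cons y w ∈ K})
    (a b c : ℝ) (hb : 0 ≤ b) (hc : 0 ≤ c) :
    (volume (P a)).toReal * (volume (P (a + b + c))).toReal ≤
      (volume (P (a + b))).toReal * (volume (P (a + c))).toReal := by
  have hPK : ∀ y, (volume (P y)).toReal = sliceVolume K y := fun y => by rw [hP]; rfl
  simp only [hPK]
  exact (isLogConcave_sliceVolume (convexBrunnMinkowski _) hKc hconv).mul_le_mul_add
    sliceVolume_nonneg hb hc

theorem slice_volume_ineq (k : ℕ) (K : Set (Fin (k + 2) → ℝ))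
    (hKc : IsCompact K) (hconv : Convex ℝ K)
    (hint : (interior K).Nonempty)
    (P : ℝ → Set (Fin (k + 1) → ℝ))
    (hP : ∀ y, P y = {w | Fin.cons y w ∈ K})
    (a b c : ℝ) (hb : 0 ≤ b) (hc : 0 ≤ c) :
    (volume (P a)).toReal * (volume (P (a + b + c))).toReal ≤
      (volume (P (a + b))).toReal * (volume (P (a + c))).toReal :=
  slice_volume_ineq_general k K hKc hconv P hP a b c hb hc
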